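/- arXiv:2308.05485 — 7 statements merged into one kernel-verified Lean document; each statement's English description precedes it below -/
import Mathlib

section
/- Reindexing of actegories: given monoidal categories W and V, a strong monoidal functor (F, ε, μ) : W → V, and a V-actegory (C, ⊙, λ, act), the data w ⊙' x := F w ⊙ x, with unitor λ'_x := (ε⁻¹ ⊙ 1_x) · λ_x and actor act'_{w,w',x} := (μ⁻¹_{w,w'} ⊙ 1_x) · act_{Fw,Fw',x}, forms a W-actegory on C. -/
open CategoryTheory Category MonoidalCategory Functor.LaxMonoidal Functor.OplaxMonoidal

section

variable {W V : Type*} [Category W] [MonoidalCategory W] [Category V] [MonoidalCategory V]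
  {C : Type*} [Category C]

/-- A (left) actegory of a monoidal category `V` on a category `C`: an action bifunctor,
a unitor and an actor (isomorphisms, natural in all arguments), satisfying the triangle
and pentagon coherence laws. -/
structure Actegory (V : Type*) [Category V] [MonoidalCategory V]
    (C : Type*) [Category C] where
  act : V ⥤ C ⥤ C
  unitor : ∀ x : C, (act.obj (𝟙_ V)).obj x ≅ x
  unitor_nat : ∀ {x y : C} (f : x ⟶ y),
    (act.obj (𝟙_ V)).map f ≫ (unitor y).hom = (unitor x).hom ≫ f
  actor : ∀ (v w : V) (x : C),
    (act.obj (v ⊗ w)).obj x ≅ (act.obj v).obj ((act.obj w).obj x)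
  actor_nat : ∀ (v w : V) {x y : C} (f : x ⟶ y),
    (act.obj (v ⊗ w)).map f ≫ (actor v w y).hom =
      (actor v w x).hom ≫ (act.obj v).map ((act.obj w).map f)
  actor_nat_left : ∀ {v v' : V} (f : v ⟶ v') (w : V) (x : C),
    (act.map (f ▷ w)).app x ≫ (actor v' w x).hom =
      (actor v w x).hom ≫ (act.map f).app ((act.obj w).obj x)
  actor_nat_mid : ∀ (v : V) {w w' : V} (g : w ⟶ w') (x : C),
    (act.map (v ◁ g)).app x ≫ (actor v w' x).hom =
      (actor v w x).hom ≫ (act.obj v).map ((act.map g).app x)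
  triangle : ∀ (v : V) (y : C),
    (actor v (𝟙_ V) y).hom ≫ (act.obj v).map (unitor y).hom = (act.map (ρ_ v).hom).app y
  pentagon : ∀ (w v v' : V) (z : C),
    (actor (w ⊗ v) v' z).hom ≫ (actor w v ((act.obj v').obj z)).hom =
      (act.map (α_ w v v').hom).app z ≫ (actor w (v ⊗ v') z).hom ≫
        (act.obj w).map ((actor v v' z).hom)

/-- The unitor `λ'_x := (ε⁻¹ ⊙ 1_x) · λ_x` of the reindexing of a `V`-actegory along a
strong monoidal functor `F : W ⥤ V`. -/
noncomputable def reindexedUnitor (F : W ⥤ V) [F.Monoidal] (A : Actegory V C) (x : C) :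
    (A.act.obj (F.obj (𝟙_ W))).obj x ⟶ x :=
  (A.act.map (η F)).app x ≫ (A.unitor x).hom

/-- The actor `act'_{w,w',x} := (μ⁻¹_{w,w'} ⊙ 1_x) · act_{Fw,Fw',x}` of the reindexing of
a `V`-actegory along a strong monoidal functor `F : W ⥤ V`. -/
noncomputable def reindexedActor (F : W ⥤ V) [F.Monoidal] (A : Actegory V C) (w w' : W) (x : C) :
    (A.act.obj (F.obj (w ⊗ w'))).obj x ⟶
      (A.act.obj (F.obj w)).obj ((A.act.obj (F.obj w')).obj x) :=
  (A.act.map (δ F w w')).app x ≫ (A.actor (F.obj w) (F.obj w') x).hom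

private lemma act_map_app_comp (A : Actegory V C) {a b c : V} (g : a ⟶ b) (h : b ⟶ c)
    (x : C) {Z : C} (t : (A.act.obj c).obj x ⟶ Z) :
    (A.act.map g).app x ≫ (A.act.map h).app x ≫ t = (A.act.map (g ≫ h)).app x ≫ t := by
  rw [A.act.map_comp]; simp

private lemma act_map_app_comp' (A : Actegory V C) {a b c : V} (g : a ⟶ b) (h : b ⟶ c)
    (x : C) :
    (A.act.map g).app x ≫ (A.act.map h).app x = (A.act.map (g ≫ h)).app x := by
  rw [A.act.map_comp]; simp

/-- Reindexing of actegories: given monoidal categories `W`, `V`, a strong monoidal functor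
`F : W ⥤ V` and a `V`-actegory on `C`, the data `w ⊙' x := F w ⊙ x` together with the
reindexed unitor and actor forms a `W`-actegory on `C` (with action bifunctor `F ⋙ act`):
the unitor and actor are natural and satisfy the triangle and pentagon laws. -/
theorem reindexed_actegory (F : W ⥤ V) [F.Monoidal] (A : Actegory V C) :
    -- naturality of the reindexed unitor
    (∀ {x y : C} (f : x ⟶ y),
      ((F ⋙ A.act).obj (𝟙_ W)).map f ≫ reindexedUnitor F A y = reindexedUnitor F A x ≫ f) ∧
    -- naturality of the reindexed actor in the `C`-argument
    (∀ (w w' : W) {x y : C} (f : x ⟶ y),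
      ((F ⋙ A.act).obj (w ⊗ w')).map f ≫ reindexedActor F A w w' y =
        reindexedActor F A w w' x ≫
          ((F ⋙ A.act).obj w).map (((F ⋙ A.act).obj w').map f)) ∧
    -- naturality of the reindexed actor in the first `W`-argument
    (∀ {w₁ w₂ : W} (f : w₁ ⟶ w₂) (w' : W) (x : C),
      ((F ⋙ A.act).map (f ▷ w')).app x ≫ reindexedActor F A w₂ w' x =
        reindexedActor F A w₁ w' x ≫
          ((F ⋙ A.act).map f).app (((F ⋙ A.act).obj w').obj x)) ∧
    -- naturality of the reindexed actor in the second `W`-argument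
    (∀ (w : W) {w₁ w₂ : W} (g : w₁ ⟶ w₂) (x : C),
      ((F ⋙ A.act).map (w ◁ g)).app x ≫ reindexedActor F A w w₂ x =
        reindexedActor F A w w₁ x ≫
          ((F ⋙ A.act).obj w).map (((F ⋙ A.act).map g).app x)) ∧
    -- triangle law
    (∀ (w : W) (y : C),
      reindexedActor F A w (𝟙_ W) y ≫
          ((F ⋙ A.act).obj w).map (reindexedUnitor F A y) =
        ((F ⋙ A.act).map (ρ_ w).hom).app y) ∧
    -- pentagon law
    (∀ (w v v' : W) (z : C),
      reindexedActor F A (w ⊗ v) v' z ≫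
          reindexedActor F A w v (((F ⋙ A.act).obj v').obj z) =
        ((F ⋙ A.act).map (α_ w v v').hom).app z ≫
          reindexedActor F A w (v ⊗ v') z ≫
            ((F ⋙ A.act).obj w).map (reindexedActor F A v v' z)) := by
  refine ⟨?_, ?_, ?_, ?_, ?_, ?_⟩
  · intro x y f
    dsimp [reindexedUnitor]
    rw [← assoc, (A.act.map (η F)).naturality f, assoc, A.unitor_nat f, assoc]
  · intro w w' x y f
    dsimp [reindexedActor]
    rw [← assoc, (A.act.map (δ F w w')).naturality f, assoc, A.actor_nat _ _ f, assoc]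
  · intro w₁ w₂ f w' x
    dsimp [reindexedActor]
    rw [← assoc, ← NatTrans.comp_app, ← A.act.map_comp, ← Functor.OplaxMonoidal.δ_natural_left,
      A.act.map_comp, NatTrans.comp_app, assoc,
      A.actor_nat_left (F.map f) (F.obj w') x, assoc]
  · intro w w₁ w₂ g x
    dsimp [reindexedActor]
    rw [← assoc, ← NatTrans.comp_app, ← A.act.map_comp, ← Functor.OplaxMonoidal.δ_natural_right,
      A.act.map_comp, NatTrans.comp_app, assoc,
      A.actor_nat_mid (F.obj w) (F.map g) x, assoc]
  · intro w y
    dsimp [reindexedActor, reindexedUnitor]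
    rw [Functor.map_comp]
    slice_lhs 2 3 => rw [← A.actor_nat_mid (F.obj w) (η F) y]
    slice_lhs 3 4 => rw [A.triangle (F.obj w) y]
    rw [act_map_app_comp, act_map_app_comp', assoc, Functor.OplaxMonoidal.right_unitality_hom]
  · intro w v v' z
    dsimp [reindexedActor]
    slice_lhs 2 3 => rw [← A.actor_nat_left (δ F w v) (F.obj v') z]
    slice_lhs 3 4 => rw [A.pentagon (F.obj w) (F.obj v) (F.obj v') z]
    rw [Functor.map_comp]
    slice_rhs 3 4 => rw [← A.actor_nat_mid (F.obj w) (δ F v v') z]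
    rw [act_map_app_comp, act_map_app_comp, act_map_app_comp]
    simp only [assoc]
    rw [act_map_app_comp, Functor.OplaxMonoidal.associativity]
    simp only [assoc]

end
end

section
/- Construction of a monoid from a monoidal heterogeneous substitution system (MHSS): let V be a monoidal category, H an endofunctor on V with pointed tensorial strength θ, and (t, η, τ) a MHSS for (V, H, θ). Define μ : t ⊗ t → t as the unique morphism {(t,η)}⟦1_t⟧ given by the MHSS property applied to the triple (t, η, 1_t). Then (t, η, μ) is a monoid in V. -/
open CategoryTheory Category MonoidalCategory

section

variable {V : Type*} [Category V] [MonoidalCategory V]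

/-- A pointed tensorial strength for an endofunctor `H` on a monoidal category `V`:
for each monoidal-pointed object `(z, e : I ⟶ z)` and each `x`, a morphism
`θ_{(z,e),x} : z ⊗ H x ⟶ H (z ⊗ x)`, natural in both arguments, satisfying the unitor
law and the associator-compatibility (tensor) law. -/
structure PointedStrength (H : V ⥤ V) where
  θ : ∀ (z : V), (𝟙_ V ⟶ z) → ∀ x : V, z ⊗ H.obj x ⟶ H.obj (z ⊗ x)
  /-- naturality in the pointed-object argument -/
  nat_pt : ∀ {z z' : V} (e : 𝟙_ V ⟶ z) (e' : 𝟙_ V ⟶ z') (g : z ⟶ z'), e ≫ g = e' →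
    ∀ x : V, g ▷ H.obj x ≫ θ z' e' x = θ z e x ≫ H.map (g ▷ x)
  /-- naturality in the second argument -/
  nat_arg : ∀ (z : V) (e : 𝟙_ V ⟶ z) {x x' : V} (f : x ⟶ x'),
    z ◁ H.map f ≫ θ z e x' = θ z e x ≫ H.map (z ◁ f)
  /-- preservation of the unitor -/
  unit_law : ∀ x : V, θ (𝟙_ V) (𝟙 (𝟙_ V)) x ≫ H.map (λ_ x).hom = (λ_ (H.obj x)).hom
  /-- preservation of the actor (compatibility with the associator and the tensor of
  pointed objects) -/
  tensor_law : ∀ (z : V) (e : 𝟙_ V ⟶ z) (w : V) (e' : 𝟙_ V ⟶ w) (x : V),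
    θ (z ⊗ w) ((λ_ (𝟙_ V)).inv ≫ (e ⊗ₘ e')) x ≫ H.map (α_ z w x).hom =
      (α_ z w (H.obj x)).hom ≫ z ◁ θ w e' x ≫ θ z e (w ⊗ x)

/-- `(t, η, τ)` is a monoidal heterogeneous substitution system (MHSS) for `(V, H, θ)`:
for every `(z, e : I ⟶ z, f : z ⟶ t)` there is a unique `h : z ⊗ t ⟶ t` with
`(1_z ⊗ η) · h = ρ_z · f` and `(1_z ⊗ τ) · h = θ_{(z,e),t} · H h · τ`. -/
def IsMHSS {H : V ⥤ V} (S : PointedStrength H)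
    (t : V) (η : 𝟙_ V ⟶ t) (τ : H.obj t ⟶ t) : Prop :=
  ∀ (z : V) (e : 𝟙_ V ⟶ z) (f : z ⟶ t),
    ∃! h : z ⊗ t ⟶ t,
      z ◁ η ≫ h = (ρ_ z).hom ≫ f ∧
      z ◁ τ ≫ h = S.θ z e t ≫ H.map h ≫ τ

end

/-!
Following the HSS literature, call `h` a bracket `{(z,e)}⟦f⟧` when it satisfies the two
equations of the MHSS property for `(z, e, f)`. Brackets are stable under precomposition
with point-preserving maps `g ▷ t` (naturality of `θ` in the pointed object) and under the
tensor `α ≫ z ◁ h ≫ k` of pointed objects (the tensor law of `θ`). So `η ▷ t ≫ μ` and `λ_t`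
are both brackets for `(I, 1, η)`, while `μ ▷ t ≫ μ` and `α ≫ t ◁ μ ≫ μ` are both brackets
for `(t ⊗ t, η ⊗ η, μ)`; uniqueness gives the left unit law and associativity.
-/

section

variable {V : Type*} [Category V] [MonoidalCategory V] {H : V ⥤ V} (S : PointedStrength H)
  {t : V} (η : 𝟙_ V ⟶ t) (τ : H.obj t ⟶ t)

def IsBracket {z : V} (e : 𝟙_ V ⟶ z) (f : z ⟶ t) (h : z ⊗ t ⟶ t) : Prop :=
  z ◁ η ≫ h = (ρ_ z).hom ≫ f ∧ z ◁ τ ≫ h = S.θ z e t ≫ H.map h ≫ τ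

variable {S η τ}

theorem IsMHSS.bracket_unique (hS : IsMHSS S t η τ) {z : V} {e : 𝟙_ V ⟶ z} {f : z ⟶ t}
    {h h' : z ⊗ t ⟶ t} (hh : IsBracket S η τ e f h) (hh' : IsBracket S η τ e f h') :
    h = h' :=
  (hS z e f).unique hh hh'

variable (S η τ) in
theorem isBracket_leftUnitor : IsBracket S η τ (𝟙 (𝟙_ V)) η (λ_ t).hom := by
  constructor
  · rw [leftUnitor_naturality, unitors_equal]
  · rw [leftUnitor_naturality, ← S.unit_law t]
    simp

theorem IsBracket.whiskerRight_comp {z z' : V} {e : 𝟙_ V ⟶ z} {e' : 𝟙_ V ⟶ z'}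
    {f : z' ⟶ t} {h : z' ⊗ t ⟶ t} (hh : IsBracket S η τ e' f h) {g : z ⟶ z'}
    (hg : e ≫ g = e') : IsBracket S η τ e (g ≫ f) (g ▷ t ≫ h) := by
  constructor
  · rw [whisker_exchange_assoc, hh.1, rightUnitor_naturality_assoc]
  · rw [whisker_exchange_assoc, hh.2, reassoc_of% S.nat_pt e e' g hg t, ← H.map_comp_assoc]

theorem IsBracket.tensor {z w : V} {e : 𝟙_ V ⟶ z} {e' : 𝟙_ V ⟶ w} {f : z ⟶ t} {f' : w ⟶ t}
    {k : z ⊗ t ⟶ t} {h : w ⊗ t ⟶ t} (hk : IsBracket S η τ e f k)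
    (hh : IsBracket S η τ e' f' h) :
    IsBracket S η τ ((λ_ (𝟙_ V)).inv ≫ (e ⊗ₘ e')) (z ◁ f' ≫ k) ((α_ z w t).hom ≫ z ◁ h ≫ k) := by
  constructor
  · rw [associator_naturality_right_assoc, ← whiskerLeft_comp_assoc, hh.1]
    simp
  · rw [associator_naturality_right_assoc, ← whiskerLeft_comp_assoc, hh.2, whiskerLeft_comp,
      whiskerLeft_comp, assoc, assoc, hk.2, reassoc_of% S.nat_arg z e h,
      ← reassoc_of% S.tensor_law z e w e' t]
    simp

theorem tensorHom_comp_eq_of_whiskerLeft_comp {z w : V} (e : 𝟙_ V ⟶ z) {e' : 𝟙_ V ⟶ w}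
    {m : z ⊗ w ⟶ z} (hm : z ◁ e' ≫ m = (ρ_ z).hom) :
    ((λ_ (𝟙_ V)).inv ≫ (e ⊗ₘ e')) ≫ m = e := by
  rw [assoc, MonoidalCategory.tensorHom_def, assoc, hm, rightUnitor_naturality, ← unitors_equal,
    Iso.inv_hom_id_assoc]

end

section

variable {V : Type*} [Category V] [MonoidalCategory V]

/-- Construction of a monoid from a MHSS: if `(t, η, τ)` is a MHSS for `(V, H, θ)` and
`μ := {(t,η)}⟦1_t⟧` is the unique morphism given by the MHSS property applied to the
triple `(t, η, 1_t)`, then `(t, η, μ)` is a monoid in `V`. -/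
theorem monoid_from_mhss {H : V ⥤ V} (S : PointedStrength H)
    (t : V) (η : 𝟙_ V ⟶ t) (τ : H.obj t ⟶ t)
    (hmhss : IsMHSS S t η τ)
    (μ : t ⊗ t ⟶ t)
    -- `μ` is the unique morphism `{(t,η)}⟦1_t⟧` determined by the MHSS property:
    (hμ₁ : t ◁ η ≫ μ = (ρ_ t).hom ≫ 𝟙 t)
    (hμ₂ : t ◁ τ ≫ μ = S.θ t η t ≫ H.map μ ≫ τ) :
    -- left unit law, right unit law, associativity
    η ▷ t ≫ μ = (λ_ t).hom ∧
    t ◁ η ≫ μ = (ρ_ t).hom ∧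
    (α_ t t t).hom ≫ t ◁ μ ≫ μ = μ ▷ t ≫ μ := by
  have hμ : IsBracket S η τ η (𝟙 t) μ := ⟨hμ₁, hμ₂⟩
  have hunit : t ◁ η ≫ μ = (ρ_ t).hom := by rw [hμ₁, comp_id]
  refine ⟨?_, hunit, ?_⟩
  · have hleft : IsBracket S η τ (𝟙 (𝟙_ V)) η (η ▷ t ≫ μ) := by
      simpa only [comp_id] using hμ.whiskerRight_comp (id_comp η)
    exact hmhss.bracket_unique hleft (isBracket_leftUnitor S η τ)
  · let e : 𝟙_ V ⟶ t ⊗ t := (λ_ (𝟙_ V)).inv ≫ (η ⊗ₘ η)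
    have hassoc : IsBracket S η τ e μ ((α_ t t t).hom ≫ t ◁ μ ≫ μ) := by
      simpa only [whiskerLeft_id, id_comp] using hμ.tensor hμ
    have hcomp : IsBracket S η τ e μ (μ ▷ t ≫ μ) := by
      simpa only [comp_id] using
        hμ.whiskerRight_comp (tensorHom_comp_eq_of_whiskerLeft_comp η hunit)
    exact hmhss.bracket_unique hassoc hcomp

end
end

section
/- In the MHSS-derived monoid, the component μ⁽¹⁾ := {Iᵖ}⟦η⟧ : I ⊗ t → t equals the left unitor λ_t. -/
open CategoryTheory Category MonoidalCategory

section

variable {V : Type*} [Category V] [MonoidalCategory V]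

theorem IsMHSS.unique {H : V ⥤ V} {S : PointedStrength H} {t : V} {η : 𝟙_ V ⟶ t}
    {τ : H.obj t ⟶ t} (hmhss : IsMHSS S t η τ) {z : V} (e : 𝟙_ V ⟶ z) (f : z ⟶ t)
    {h h' : z ⊗ t ⟶ t}
    (h₁ : z ◁ η ≫ h = (ρ_ z).hom ≫ f) (h₂ : z ◁ τ ≫ h = S.θ z e t ≫ H.map h ≫ τ)
    (h'₁ : z ◁ η ≫ h' = (ρ_ z).hom ≫ f) (h'₂ : z ◁ τ ≫ h' = S.θ z e t ≫ H.map h' ≫ τ) :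
    h = h' :=
  (hmhss z e f).unique ⟨h₁, h₂⟩ ⟨h'₁, h'₂⟩

theorem whiskerLeft_comp_leftUnitor_hom {x : V} (η : 𝟙_ V ⟶ x) :
    𝟙_ V ◁ η ≫ (λ_ x).hom = (ρ_ (𝟙_ V)).hom ≫ η := by
  rw [leftUnitor_naturality, unitors_equal]

theorem PointedStrength.whiskerLeft_comp_leftUnitor_hom {H : V ⥤ V} (S : PointedStrength H)
    {x y : V} (τ : H.obj x ⟶ y) :
    𝟙_ V ◁ τ ≫ (λ_ y).hom = S.θ (𝟙_ V) (𝟙 (𝟙_ V)) x ≫ H.map (λ_ x).hom ≫ τ := by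
  rw [leftUnitor_naturality, ← S.unit_law, assoc]

/-- In the MHSS-derived monoid, the component `μ⁽¹⁾ := {Iᵖ}⟦η⟧ : I ⊗ t ⟶ t` equals the
left unitor `λ_t`: any morphism satisfying the defining equations of `{Iᵖ}⟦η⟧` (for the
pointed object `Iᵖ = (I, 1_I)`) is the left unitor. -/
theorem mhss_mu_one_eq_left_unitor {H : V ⥤ V} (S : PointedStrength H)
    (t : V) (η : 𝟙_ V ⟶ t) (τ : H.obj t ⟶ t)
    (hmhss : IsMHSS S t η τ)
    (h : 𝟙_ V ⊗ t ⟶ t)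
    -- `h` is the unique morphism `{Iᵖ}⟦η⟧` determined by the MHSS property:
    (h₁ : 𝟙_ V ◁ η ≫ h = (ρ_ (𝟙_ V)).hom ≫ η)
    (h₂ : 𝟙_ V ◁ τ ≫ h = S.θ (𝟙_ V) (𝟙 (𝟙_ V)) t ≫ H.map h ≫ τ) :
    h = (λ_ t).hom :=
  hmhss.unique (𝟙 _) η h₁ h₂ (whiskerLeft_comp_leftUnitor_hom η)
    (S.whiskerLeft_comp_leftUnitor_hom τ)

end
end

section
/- A final coalgebra is a completely iterative algebra: let F be an endofunctor on a category C with binary coproducts, and let (t, out) be a final F-coalgebra. Then the F-algebra (t, out⁻¹) is completely iterative: for every object x and every morphism e : x → F x + t, there is a unique h : x → t such that e · (F h + 1_t) · [out⁻¹, 1_t] = h. -/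
/-!
Glue a flat equation morphism `e : x ⟶ F x ⨿ t` and the final coalgebra into a coalgebra on
`x ⨿ t`, whose structure map runs `e` on `x` and `out` on `t`. A map `x ⨿ t ⟶ t` that is the
identity on `t` is a coalgebra morphism exactly when its restriction to `x` solves `e`, and the
unique coalgebra morphism into `t` is the identity on `t` because `inr` is a coalgebra
morphism. So solutions of `e` correspond to coalgebra morphisms into the final coalgebra.
-/

open CategoryTheory Category Limits

namespace CategoryTheory.Endofunctor.Coalgebra

variable {C : Type*} [Category C] {F : C ⥤ C}

noncomputable def isTerminalOfExistsUnique (A : Coalgebra F)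
    (h : ∀ (x : C) (c : x ⟶ F.obj x), ∃! f : x ⟶ A.V, c ≫ F.map f = f ≫ A.str) :
    IsTerminal A :=
  IsTerminal.ofUniqueHom
    (fun B => ⟨(h B.V B.str).exists.choose, (h B.V B.str).exists.choose_spec⟩)
    fun B m => Hom.ext ((h B.V B.str).unique m.h (h B.V B.str).exists.choose_spec)

section FlatEquation

variable [HasBinaryCoproducts C] {x : C} (A : Coalgebra F) (e : x ⟶ F.obj x ⨿ A.V)

noncomputable abbrev ofFlatEquation : Coalgebra F where
  V := x ⨿ A.V
  str := coprod.desc (e ≫ coprod.desc (F.map coprod.inl) (A.str ≫ F.map coprod.inr))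
    (A.str ≫ F.map coprod.inr)

noncomputable def inrHom : A ⟶ ofFlatEquation A e where
  f := coprod.inr
  h := (coprod.inr_desc _ _).symm

theorem desc_id_isHom_iff (h : x ⟶ A.V) :
    (ofFlatEquation A e).str ≫ F.map (coprod.desc h (𝟙 A.V)) = coprod.desc h (𝟙 A.V) ≫ A.str ↔
      h ≫ A.str = e ≫ coprod.desc (F.map h) A.str := by
  have hdesc : coprod.desc (F.map coprod.inl) (A.str ≫ F.map coprod.inr) ≫
      F.map (coprod.desc h (𝟙 A.V)) = coprod.desc (F.map h) A.str := by
    ext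
    · rw [coprod.inl_desc_assoc, ← F.map_comp, coprod.inl_desc, coprod.inl_desc]
    · rw [coprod.inr_desc_assoc, assoc, ← F.map_comp, coprod.inr_desc, F.map_id, comp_id,
        coprod.inr_desc]
  rw [coprod.hom_ext_iff, coprod.inl_desc_assoc, coprod.inr_desc_assoc, assoc, hdesc,
    coprod.inl_desc_assoc, coprod.inr_desc_assoc, assoc, ← F.map_comp, coprod.inr_desc, F.map_id,
    comp_id, id_comp]
  exact ⟨fun hom => hom.1.symm, fun sol => ⟨sol.symm, rfl⟩⟩

theorem existsUnique_solution_of_isTerminal (hA : IsTerminal A) :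
    ∃! h : x ⟶ A.V, h ≫ A.str = e ≫ coprod.desc (F.map h) A.str := by
  let g := hA.from (ofFlatEquation A e)
  have hinr : coprod.inr ≫ g.f = 𝟙 A.V := congrArg Hom.f (hA.hom_ext (inrHom A e ≫ g) (𝟙 A))
  have hg : g.f = coprod.desc (coprod.inl ≫ g.f) (𝟙 A.V) := by
    ext
    · exact (coprod.inl_desc _ _).symm
    · exact hinr.trans (coprod.inr_desc _ _).symm
  refine ⟨coprod.inl ≫ g.f, (desc_id_isHom_iff A e _).1 (hg ▸ g.h), fun h hh => ?_⟩
  let k : ofFlatEquation A e ⟶ A := ⟨coprod.desc h (𝟙 A.V), (desc_id_isHom_iff A e h).2 hh⟩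
  rw [← hA.hom_ext k g]
  exact coprod.inl_desc h (𝟙 A.V) |>.symm

end FlatEquation

end CategoryTheory.Endofunctor.Coalgebra

theorem eq_comp_map_desc_iff {C : Type*} [Category C] [HasBinaryCoproducts C] {x y s t : C}
    (i : t ≅ s) (e : x ⟶ y ⨿ t) (f : y ⟶ s) (h : x ⟶ t) :
    h = e ≫ coprod.map f (𝟙 t) ≫ coprod.desc i.inv (𝟙 t) ↔ h ≫ i.hom = e ≫ coprod.desc f i.hom := by
  have : coprod.map f (𝟙 t) ≫ coprod.desc i.inv (𝟙 t) = coprod.desc f i.hom ≫ i.inv := by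
    ext <;> simp
  rw [this, ← assoc, Iso.eq_comp_inv]

/-- A final coalgebra is a completely iterative algebra: let `F` be an endofunctor on a
category `C` with binary coproducts, and `(t, out)` a final `F`-coalgebra. Then `out` is
an isomorphism (Lambek), and for any inverse `α` of `out`, the `F`-algebra `(t, α)` is
completely iterative: every flat equation morphism `e : x ⟶ F x ⨿ t` has a unique
solution `h : x ⟶ t`, i.e. `h = e ≫ (F h ⨿ 1_t) ≫ [α, 1_t]`. -/
theorem final_coalgebra_is_cia
    (C : Type*) [Category C] [HasBinaryCoproducts C]
    (F : C ⥤ C) (t : C) (out : t ⟶ F.obj t)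
    -- `(t, out)` is a final coalgebra:
    (hfinal : ∀ (x : C) (c : x ⟶ F.obj x), ∃! h : x ⟶ t, c ≫ F.map h = h ≫ out) :
    -- `out` is an isomorphism ...
    (∃ α : F.obj t ⟶ t, out ≫ α = 𝟙 t ∧ α ≫ out = 𝟙 (F.obj t)) ∧
    -- ... and for any inverse `α` of `out`, `(t, α)` is a completely iterative algebra:
    ∀ (α : F.obj t ⟶ t), out ≫ α = 𝟙 t → α ≫ out = 𝟙 (F.obj t) →
      ∀ (x : C) (e : x ⟶ F.obj x ⨿ t),
        ∃! h : x ⟶ t,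
          h = e ≫ coprod.map (F.map h) (𝟙 t) ≫ coprod.desc α (𝟙 t) := by
  open Endofunctor.Coalgebra in
  have hT : IsTerminal (⟨t, out⟩ : Endofunctor.Coalgebra F) := isTerminalOfExistsUnique _ hfinal
  refine ⟨⟨Terminal.strInv hT, Terminal.right_inv hT, Terminal.left_inv hT⟩,
    fun α hoα hαo x e => ?_⟩
  simpa only [eq_comp_map_desc_iff (Iso.mk out α hoα hαo)] using
    existsUnique_solution_of_isTerminal _ e hT
end

section
/- Construction of a MHSS from a final coalgebra: let V be a monoidal category with binary coproducts that distribute over the tensor in its second argument, H an endofunctor on V with pointed tensorial strength θ, and (t, out) a final coalgebra of the functor I + H(−). Writing out⁻¹ = [η, τ] with η : I → t and τ : H t → t, the triple (t, η, τ) is a MHSS for (V, H, θ). -/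
open CategoryTheory Category MonoidalCategory

section

open Limits

variable {V : Type*} [Category V] [MonoidalCategory V] [HasBinaryCoproducts V]

/-- The endofunctor `x ↦ I ⨿ H x` (i.e. `I + H(−)`). -/
@[simps]
noncomputable def idPlus (H : V ⥤ V) : V ⥤ V where
  obj x := (𝟙_ V) ⨿ H.obj x
  map f := coprod.map (𝟙 (𝟙_ V)) (H.map f)
  map_id x := by simp
  map_comp f g := by simp

/-!
A final coalgebra `out : t ⟶ F t` with inverse `a` is a completely iterative algebra: a flat
equation `e : x ⟶ F x ⨿ t` together with `out` makes `x ⨿ t` a coalgebra, and `s : x ⟶ t`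
solves `e` exactly when `[s, 1] : x ⨿ t ⟶ t` is a coalgebra morphism, so finality gives a unique
solution. Since `z ⊗ -` preserves the coproduct `t ≅ I ⨿ H t`, the two MHSS equations for
`h : z ⊗ t ⟶ t` amount to the single equation `h = eqm ≫ [F h ≫ out⁻¹, 1]` for the flat equation
`eqm := (1_z ⊗ out) ≫ δ ≫ (ρ_z + θ) ≫ [f ≫ inr, inr ≫ inl]` on `z ⊗ t`.
-/

section CompletelyIterative

variable {C : Type*} [Category C] [HasBinaryCoproducts C] (F : C ⥤ C)

def IsCompletelyIterative {t : C} (a : F.obj t ⟶ t) : Prop :=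
  ∀ (x : C) (e : x ⟶ F.obj x ⨿ t), ∃! s : x ⟶ t, s = e ≫ coprod.desc (F.map s ≫ a) (𝟙 t)

noncomputable def flatEquationCoalgebra {x t : C} (out : t ⟶ F.obj t) (e : x ⟶ F.obj x ⨿ t) :
    x ⨿ t ⟶ F.obj (x ⨿ t) :=
  coprod.desc e coprod.inr ≫ coprod.desc (F.map coprod.inl) (out ≫ F.map coprod.inr)

variable {F} {t : C} {out : t ⟶ F.obj t} {a : F.obj t ⟶ t}

theorem solution_iff_isCoalgebraHom (hinv₁ : out ≫ a = 𝟙 t) (hinv₂ : a ≫ out = 𝟙 (F.obj t))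
    {x : C} (e : x ⟶ F.obj x ⨿ t) (s : x ⟶ t) :
    s = e ≫ coprod.desc (F.map s ≫ a) (𝟙 t) ↔
      flatEquationCoalgebra F out e ≫ F.map (coprod.desc s (𝟙 t)) = coprod.desc s (𝟙 t) ≫ out := by
  have hunfold : flatEquationCoalgebra F out e ≫ F.map (coprod.desc s (𝟙 t)) =
      coprod.desc (e ≫ coprod.desc (F.map s) out) out := by
    ext <;> simp [flatEquationCoalgebra, coprod.inl_desc, coprod.inr_desc, ← F.map_comp]
  rw [hunfold]
  constructor
  · intro hs
    ext
    · conv_rhs => rw [coprod.inl_desc_assoc, hs]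
      simp [coprod.inl_desc, hinv₂]
    · simp [coprod.inr_desc]
  · intro hhom
    calc s = (coprod.inl ≫ coprod.desc s (𝟙 t) ≫ out) ≫ a := by simp [coprod.inl_desc, hinv₁]
      _ = e ≫ coprod.desc (F.map s ≫ a) (𝟙 t) := by
        simp [← hhom, coprod.inl_desc, hinv₁]

theorem isCompletelyIterative_of_isFinal
    (hfinal : ∀ (x : C) (c : x ⟶ F.obj x), ∃! h : x ⟶ t, c ≫ F.map h = h ≫ out)
    (hinv₁ : out ≫ a = 𝟙 t) (hinv₂ : a ≫ out = 𝟙 (F.obj t)) :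
    IsCompletelyIterative F a := by
  intro x e
  obtain ⟨k, hk, hk_unique⟩ := hfinal _ (flatEquationCoalgebra F out e)
  have hk_inr : coprod.inr ≫ k = 𝟙 t := by
    obtain ⟨_, -, hid_unique⟩ := hfinal t out
    rw [hid_unique (coprod.inr ≫ k) ?_, hid_unique (𝟙 t) (by simp)]
    simpa [flatEquationCoalgebra, coprod.inr_desc] using coprod.inr ≫= hk
  have hk_desc : coprod.desc (coprod.inl ≫ k) (𝟙 t) = k := by
    ext <;> simp [coprod.inl_desc, coprod.inr_desc, hk_inr]
  refine ⟨coprod.inl ≫ k, (solution_iff_isCoalgebraHom hinv₁ hinv₂ e _).2 (by rwa [hk_desc]),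
    fun s hs => ?_⟩
  rw [← hk_unique _ ((solution_iff_isCoalgebraHom hinv₁ hinv₂ e s).1 hs), coprod.inl_desc]

end CompletelyIterative

theorem whiskerLeft_comp_eq_and_iff_eq_desc {z a b t y : V}
    (δ : z ⊗ (a ⨿ b) ⟶ (z ⊗ a) ⨿ (z ⊗ b))
    (hδ₁ : coprod.desc (z ◁ coprod.inl) (z ◁ coprod.inr) ≫ δ = 𝟙 _)
    (hδ₂ : δ ≫ coprod.desc (z ◁ coprod.inl) (z ◁ coprod.inr) = 𝟙 _)
    {out : t ⟶ a ⨿ b} {η : a ⟶ t} {τ : b ⟶ t}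
    (hinv₁ : out ≫ coprod.desc η τ = 𝟙 t) (hinv₂ : coprod.desc η τ ≫ out = 𝟙 (a ⨿ b))
    (g : z ⊗ t ⟶ y) (p : z ⊗ a ⟶ y) (q : z ⊗ b ⟶ y) :
    z ◁ η ≫ g = p ∧ z ◁ τ ≫ g = q ↔ g = z ◁ out ≫ δ ≫ coprod.desc p q := by
  constructor
  · rintro ⟨rfl, rfl⟩
    calc g = z ◁ out ≫ (δ ≫ coprod.desc (z ◁ coprod.inl) (z ◁ coprod.inr)) ≫
          z ◁ coprod.desc η τ ≫ g := by
          rw [hδ₂, id_comp, ← whiskerLeft_comp_assoc, hinv₁, whiskerLeft_id, id_comp]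
      _ = z ◁ out ≫ δ ≫ coprod.desc (z ◁ η ≫ g) (z ◁ τ ≫ g) := by
          simp only [assoc, coprod.desc_comp, ← whiskerLeft_comp_assoc, coprod.inl_desc,
            coprod.inr_desc]
  · rintro rfl
    have hinl : z ◁ (coprod.inl : a ⟶ a ⨿ b) ≫ δ = coprod.inl := by
      simpa [coprod.inl_desc] using coprod.inl ≫= hδ₁
    have hinr : z ◁ (coprod.inr : b ⟶ a ⨿ b) ≫ δ = coprod.inr := by
      simpa [coprod.inr_desc] using coprod.inr ≫= hδ₁
    have hηout : η ≫ out = coprod.inl := by simpa [coprod.inl_desc] using coprod.inl ≫= hinv₂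
    have hτout : τ ≫ out = coprod.inr := by simpa [coprod.inr_desc] using coprod.inr ≫= hinv₂
    constructor
    · rw [← whiskerLeft_comp_assoc, hηout, reassoc_of% hinl, coprod.inl_desc]
    · rw [← whiskerLeft_comp_assoc, hτout, reassoc_of% hinr, coprod.inr_desc]

/-- Construction of a MHSS from a final coalgebra: let `V` be a monoidal category with
binary coproducts that distribute over the tensor in its second argument (with explicit
distributor `δ`), `H` an endofunctor on `V` with pointed tensorial strength `θ`, and
`(t, out)` a final coalgebra of the functor `I + H(−)`.  Writing `out⁻¹ = [η, τ]`, the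
triple `(t, η, τ)` is a MHSS for `(V, H, θ)`. -/
theorem mhss_from_final_coalgebra {H : V ⥤ V} (S : PointedStrength H)
    -- binary coproducts distribute over the tensor in its second argument:
    (δ : ∀ v w₁ w₂ : V, v ⊗ (w₁ ⨿ w₂) ⟶ (v ⊗ w₁) ⨿ (v ⊗ w₂))
    (hδ : ∀ v w₁ w₂ : V,
      coprod.desc (v ◁ (coprod.inl : w₁ ⟶ w₁ ⨿ w₂)) (v ◁ (coprod.inr : w₂ ⟶ w₁ ⨿ w₂)) ≫
          δ v w₁ w₂ = 𝟙 _ ∧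
      δ v w₁ w₂ ≫
          coprod.desc (v ◁ (coprod.inl : w₁ ⟶ w₁ ⨿ w₂)) (v ◁ (coprod.inr : w₂ ⟶ w₁ ⨿ w₂)) =
        𝟙 _)
    (t : V) (out : t ⟶ (idPlus H).obj t)
    -- `(t, out)` is a final coalgebra of `I + H(−)`:
    (hfinal : ∀ (x : V) (c : x ⟶ (idPlus H).obj x),
      ∃! h : x ⟶ t, c ≫ (idPlus H).map h = h ≫ out)
    (η : 𝟙_ V ⟶ t) (τ : H.obj t ⟶ t)
    -- `out⁻¹ = [η, τ]`:
    (hinv₁ : out ≫ coprod.desc η τ = 𝟙 t)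
    (hinv₂ : coprod.desc η τ ≫ out = 𝟙 ((idPlus H).obj t)) :
    IsMHSS S t η τ := by
  intro z e f
  -- `simp` does not see through `(idPlus H).obj t`
  change t ⟶ 𝟙_ V ⨿ H.obj t at out
  let eqm : z ⊗ t ⟶ (𝟙_ V ⨿ H.obj (z ⊗ t)) ⨿ t :=
    z ◁ out ≫ δ z _ _ ≫
      coprod.map (ρ_ z).hom (S.θ z e t) ≫ coprod.desc (f ≫ coprod.inr) (coprod.inr ≫ coprod.inl)
  have hsolution : ∀ h : z ⊗ t ⟶ t,
      (z ◁ η ≫ h = (ρ_ z).hom ≫ f ∧ z ◁ τ ≫ h = S.θ z e t ≫ H.map h ≫ τ) ↔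
        h = eqm ≫ coprod.desc (coprod.map (𝟙 _) (H.map h) ≫ coprod.desc η τ) (𝟙 t) := by
    intro h
    rw [whiskerLeft_comp_eq_and_iff_eq_desc (δ z _ _) (hδ z _ _).1 (hδ z _ _).2 hinv₁ hinv₂]
    simp [eqm, coprod.inl_desc, coprod.inr_desc]
  exact (existsUnique_congr hsolution).2
    (isCompletelyIterative_of_isFinal hfinal hinv₁ hinv₂ (z ⊗ t) eqm)

end
end

section
/- Equivalence of solution diagrams: in the setting of the final-coalgebra-to-MHSS construction, a morphism h : z ⊗ t → t satisfies the defining MHSS diagram for the triple (z, e, f) if and only if h is a solution of the flat equation morphism eqm : z ⊗ t → (I + H(−))(z ⊗ t) + t defined as (1_z ⊗ out) · δ⁻¹ · (ρ_z + θ_{(z,e),t}) · [f · inr, inr · inl]. -/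
/-!
Because `out` and `δ` are isomorphisms, so is `(1_z ⊗ out) · δ : z ⊗ t ≅ (z ⊗ I) + (z ⊗ H t)`, and
its inverse has components `1_z ⊗ η` and `1_z ⊗ τ`. Composing `eqm` with
`((I + H h) + 1_t) · [out⁻¹, 1_t]` collapses to `(1_z ⊗ out) · δ · [ρ_z · f, θ · H h · τ]`, so `h`
solves `eqm` exactly when its two components along that isomorphism are `ρ_z · f` and
`θ · H h · τ`, which are the two squares of the MHSS diagram.
-/

open CategoryTheory Category MonoidalCategory

section

open Limits

variable {C : Type*} [Category C] [HasBinaryCoproducts C]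

theorem eq_hom_comp_coprod_desc_iff {X Y A B : C} (φ : X ≅ A ⨿ B) (h : X ⟶ Y) (a : A ⟶ Y)
    (b : B ⟶ Y) :
    ((coprod.inl ≫ φ.inv) ≫ h = a ∧ (coprod.inr ≫ φ.inv) ≫ h = b) ↔
      h = φ.hom ≫ coprod.desc a b := by
  simp only [assoc]
  rw [← Iso.inv_comp_eq]
  constructor
  · rintro ⟨ha, hb⟩
    ext <;> simp only [ha, hb, coprod.inl_desc, coprod.inr_desc]
  · rintro hφ
    simp only [hφ, coprod.inl_desc, coprod.inr_desc, and_self]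

theorem coprod_map_comp_desc_comp_map_desc {A B P D E T T' : C} (a : A ⟶ T') (b : B ⟶ D)
    (f : T' ⟶ T) (k : D ⟶ E) (η : P ⟶ T) (τ : E ⟶ T) :
    coprod.map a b ≫ coprod.desc (f ≫ coprod.inr) (coprod.inr ≫ coprod.inl) ≫
        coprod.map (coprod.map (𝟙 P) k) (𝟙 T) ≫ coprod.desc (coprod.desc η τ) (𝟙 T) =
      coprod.desc (a ≫ f) (b ≫ k ≫ τ) := by
  ext <;> simp [coprod.inl_desc, coprod.inr_desc]

variable [MonoidalCategory C]

theorem diagram_iff_eq_flat_solution {z t P Q R W : C} (out : t ⟶ P ⨿ Q) (η : P ⟶ t)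
    (τ : Q ⟶ t) (hinv₁ : out ≫ coprod.desc η τ = 𝟙 t)
    (hinv₂ : coprod.desc η τ ≫ out = 𝟙 (P ⨿ Q))
    (δ : z ⊗ (P ⨿ Q) ⟶ (z ⊗ P) ⨿ (z ⊗ Q))
    (hδ₁ : coprod.desc (z ◁ coprod.inl) (z ◁ coprod.inr) ≫ δ = 𝟙 _)
    (hδ₂ : δ ≫ coprod.desc (z ◁ coprod.inl) (z ◁ coprod.inr) = 𝟙 _)
    (r : z ⊗ P ⟶ W) (θ : z ⊗ Q ⟶ R) (f : W ⟶ t) (k : R ⟶ Q) (h : z ⊗ t ⟶ t) :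
    (z ◁ η ≫ h = r ≫ f ∧ z ◁ τ ≫ h = θ ≫ k ≫ τ) ↔
      h = (z ◁ out ≫ δ ≫ coprod.map r θ ≫
          coprod.desc (f ≫ coprod.inr) (coprod.inr ≫ coprod.inl)) ≫
        coprod.map (coprod.map (𝟙 P) k) (𝟙 t) ≫ coprod.desc (coprod.desc η τ) (𝟙 t) := by
  let φ : z ⊗ t ≅ (z ⊗ P) ⨿ (z ⊗ Q) :=
    whiskerLeftIso z ⟨out, _, hinv₁, hinv₂⟩ ≪≫ ⟨δ, _, hδ₂, hδ₁⟩
  have inl_inv : coprod.inl ≫ φ.inv = z ◁ η := by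
    simp only [φ, Iso.trans_inv, whiskerLeftIso_inv, coprod.inl_desc_assoc, ← whiskerLeft_comp,
      coprod.inl_desc]
  have inr_inv : coprod.inr ≫ φ.inv = z ◁ τ := by
    simp only [φ, Iso.trans_inv, whiskerLeftIso_inv, coprod.inr_desc_assoc, ← whiskerLeft_comp,
      coprod.inr_desc]
  simp only [assoc, coprod_map_comp_desc_comp_map_desc]
  rw [← assoc (z ◁ out), ← inl_inv, ← inr_inv]
  exact eq_hom_comp_coprod_desc_iff φ h _ _

end

section

open Limits

variable {V : Type*} [Category V] [MonoidalCategory V] [HasBinaryCoproducts V]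

theorem mhss_diagram_iff_cia_solution_general {H : V ⥤ V} (S : PointedStrength H)
    -- binary coproducts distribute over the tensor in its second argument:
    (δ : ∀ v w₁ w₂ : V, v ⊗ (w₁ ⨿ w₂) ⟶ (v ⊗ w₁) ⨿ (v ⊗ w₂))
    (hδ : ∀ v w₁ w₂ : V,
      coprod.desc (v ◁ (coprod.inl : w₁ ⟶ w₁ ⨿ w₂)) (v ◁ (coprod.inr : w₂ ⟶ w₁ ⨿ w₂)) ≫
          δ v w₁ w₂ = 𝟙 _ ∧
      δ v w₁ w₂ ≫
          coprod.desc (v ◁ (coprod.inl : w₁ ⟶ w₁ ⨿ w₂)) (v ◁ (coprod.inr : w₂ ⟶ w₁ ⨿ w₂)) =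
        𝟙 _)
    (t : V) (out : t ⟶ (idPlus H).obj t)
    (η : 𝟙_ V ⟶ t) (τ : H.obj t ⟶ t)
    -- `out⁻¹ = [η, τ]`:
    (hinv₁ : out ≫ coprod.desc η τ = 𝟙 t)
    (hinv₂ : coprod.desc η τ ≫ out = 𝟙 ((idPlus H).obj t))
    (z : V) (e : 𝟙_ V ⟶ z) (f : z ⟶ t) (h : z ⊗ t ⟶ t) :
    -- the flat equation morphism `eqm`
    letI eqm : z ⊗ t ⟶ ((idPlus H).obj (z ⊗ t)) ⨿ t :=
      z ◁ out ≫ δ z (𝟙_ V) (H.obj t) ≫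
        coprod.map (ρ_ z).hom (S.θ z e t) ≫
        coprod.desc (f ≫ coprod.inr)
          ((coprod.inr : H.obj (z ⊗ t) ⟶ (𝟙_ V) ⨿ H.obj (z ⊗ t)) ≫ coprod.inl)
    -- the MHSS diagram for `h` holds iff `h` is a solution of `eqm`
    ((z ◁ η ≫ h = (ρ_ z).hom ≫ f ∧ z ◁ τ ≫ h = S.θ z e t ≫ H.map h ≫ τ) ↔
      h = eqm ≫ coprod.map ((idPlus H).map h) (𝟙 t) ≫
        coprod.desc (coprod.desc η τ) (𝟙 t)) :=
  diagram_iff_eq_flat_solution out η τ hinv₁ hinv₂ (δ _ _ _) (hδ _ _ _).1 (hδ _ _ _).2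
    (ρ_ z).hom (S.θ z e t) f (H.map h) h

/-- Equivalence of solution diagrams: in the setting of the final-coalgebra-to-MHSS
construction, a morphism `h : z ⊗ t ⟶ t` satisfies the defining MHSS diagram for the
triple `(z, e, f)` if and only if `h` is a solution of the flat equation morphism
`eqm := (1_z ⊗ out) · δ · (ρ_z + θ_{(z,e),t}) · [f·inr, inr·inl]` at the completely
iterative algebra `(t, out⁻¹)`. -/
theorem mhss_diagram_iff_cia_solution {H : V ⥤ V} (S : PointedStrength H)
    -- binary coproducts distribute over the tensor in its second argument:
    (δ : ∀ v w₁ w₂ : V, v ⊗ (w₁ ⨿ w₂) ⟶ (v ⊗ w₁) ⨿ (v ⊗ w₂))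
    (hδ : ∀ v w₁ w₂ : V,
      coprod.desc (v ◁ (coprod.inl : w₁ ⟶ w₁ ⨿ w₂)) (v ◁ (coprod.inr : w₂ ⟶ w₁ ⨿ w₂)) ≫
          δ v w₁ w₂ = 𝟙 _ ∧
      δ v w₁ w₂ ≫
          coprod.desc (v ◁ (coprod.inl : w₁ ⟶ w₁ ⨿ w₂)) (v ◁ (coprod.inr : w₂ ⟶ w₁ ⨿ w₂)) =
        𝟙 _)
    (t : V) (out : t ⟶ (idPlus H).obj t)
    -- `(t, out)` is a final coalgebra of `I + H(−)`:
    (hfinal : ∀ (x : V) (c : x ⟶ (idPlus H).obj x),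
      ∃! k : x ⟶ t, c ≫ (idPlus H).map k = k ≫ out)
    (η : 𝟙_ V ⟶ t) (τ : H.obj t ⟶ t)
    -- `out⁻¹ = [η, τ]`:
    (hinv₁ : out ≫ coprod.desc η τ = 𝟙 t)
    (hinv₂ : coprod.desc η τ ≫ out = 𝟙 ((idPlus H).obj t))
    (z : V) (e : 𝟙_ V ⟶ z) (f : z ⟶ t) (h : z ⊗ t ⟶ t) :
    -- the flat equation morphism `eqm`
    letI eqm : z ⊗ t ⟶ ((idPlus H).obj (z ⊗ t)) ⨿ t :=
      z ◁ out ≫ δ z (𝟙_ V) (H.obj t) ≫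
        coprod.map (ρ_ z).hom (S.θ z e t) ≫
        coprod.desc (f ≫ coprod.inr)
          ((coprod.inr : H.obj (z ⊗ t) ⟶ (𝟙_ V) ⨿ H.obj (z ⊗ t)) ≫ coprod.inl)
    -- the MHSS diagram for `h` holds iff `h` is a solution of `eqm`
    ((z ◁ η ≫ h = (ρ_ z).hom ≫ f ∧ z ◁ τ ≫ h = S.θ z e t ≫ H.map h ≫ τ) ↔
      h = eqm ≫ coprod.map ((idPlus H).map h) (𝟙 t) ≫
        coprod.desc (coprod.desc η τ) (𝟙 t)) :=
  mhss_diagram_iff_cia_solution_general S δ hδ t out η τ hinv₁ hinv₂ z e f h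

end
end

section
/- Lineator from a relative lax commutator: let F : W → V be strong monoidal, (C, ⊙, λ, act) a V-actegory, v₀ an object of V, and γ a lax commutator for v₀ relative to F (i.e., a natural transformation γ_w : F w ⊗ v₀ → v₀ ⊗ F w satisfying the unit law γ_{I'} = (ε⁻¹ ⊗ 1) · λ_{v₀} · ρ⁻¹_{v₀} · (1 ⊗ ε) and the tensor/hexagon law). Then the family ℓ_{w,x} := act⁻¹_{Fw,v₀,x} · (γ_w ⊙ 1_x) · act_{v₀,Fw,x} is a lax lineator for the endofunctor G := v₀ ⊙ (−) on C, with respect to the W-actegory obtained by reindexing ⊙ along F, both as source and target. -/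
open CategoryTheory Category MonoidalCategory Functor.LaxMonoidal Functor.OplaxMonoidal

section

variable {W V : Type*} [Category W] [MonoidalCategory W] [Category V] [MonoidalCategory V]

/-- A lax commutator for an object `v₀` of `V` relative to a strong monoidal functor
`F : W ⥤ V`: a natural transformation `γ_w : F w ⊗ v₀ ⟶ v₀ ⊗ F w` satisfying the unit
law (determining `γ_{I'}` from `ε` and the unitors) and the tensor (hexagon-type) law
(determining `γ_{w⊗w'}` from `γ_w`, `γ_{w'}`, `μ` and the associator). -/
structure RelLaxCommutator (F : W ⥤ V) [F.Monoidal] (v₀ : V) where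
  γ : ∀ w : W, F.obj w ⊗ v₀ ⟶ v₀ ⊗ F.obj w
  naturality : ∀ {w w' : W} (g : w ⟶ w'),
    F.map g ▷ v₀ ≫ γ w' = γ w ≫ v₀ ◁ F.map g
  unit_law : γ (𝟙_ W) =
    η F ▷ v₀ ≫ (λ_ v₀).hom ≫ (ρ_ v₀).inv ≫ v₀ ◁ ε F
  tensor_law : ∀ w w' : W, γ (w ⊗ w') =
    δ F w w' ▷ v₀ ≫ (α_ (F.obj w) (F.obj w') v₀).hom ≫
      F.obj w ◁ γ w' ≫ (α_ (F.obj w) v₀ (F.obj w')).inv ≫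
      γ w ▷ F.obj w' ≫ (α_ v₀ (F.obj w) (F.obj w')).hom ≫ v₀ ◁ μ F w w'

end

section

variable {W V : Type*} [Category W] [MonoidalCategory W] [Category V] [MonoidalCategory V]
  {C : Type*} [Category C]

/-- The candidate lineator `ℓ_{w,x} := act⁻¹_{Fw,v₀,x} · (γ_w ⊙ 1_x) · act_{v₀,Fw,x}`
for the endofunctor `G := v₀ ⊙ (−)` built from a relative lax commutator `γ`. -/
noncomputable def lineatorOfCommutator (F : W ⥤ V) [F.Monoidal] (A : Actegory V C) {v₀ : V}
    (c : RelLaxCommutator F v₀) (w : W) (x : C) :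
    (A.act.obj (F.obj w)).obj ((A.act.obj v₀).obj x) ⟶
      (A.act.obj v₀).obj ((A.act.obj (F.obj w)).obj x) :=
  (A.actor (F.obj w) v₀ x).inv ≫ (A.act.map (c.γ w)).app x ≫ (A.actor v₀ (F.obj w) x).hom

namespace Actegory

lemma actor_inv_nat_left (A : Actegory V C) {v v' : V} (f : v ⟶ v') (w : V) (x : C) :
    (A.actor v w x).inv ≫ (A.act.map (f ▷ w)).app x =
      (A.act.map f).app ((A.act.obj w).obj x) ≫ (A.actor v' w x).inv := by
  rw [Iso.inv_comp_eq, ← assoc, ← A.actor_nat_left f w x, assoc, Iso.hom_inv_id, comp_id]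

lemma actor_inv_nat_mid (A : Actegory V C) (v : V) {w w' : V} (g : w ⟶ w') (x : C) :
    (A.actor v w x).inv ≫ (A.act.map (v ◁ g)).app x =
      (A.act.obj v).map ((A.act.map g).app x) ≫ (A.actor v w' x).inv := by
  rw [Iso.inv_comp_eq, ← assoc, ← A.actor_nat_mid v g x, assoc, Iso.hom_inv_id, comp_id]

lemma act_map_cancel (A : Actegory V C) {a b : C} {f g : a ⟶ b}
    (h : (A.act.obj (𝟙_ V)).map f = (A.act.obj (𝟙_ V)).map g) : f = g := by
  have hf := A.unitor_nat f
  have hg := A.unitor_nat g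
  rw [h, hg] at hf
  exact (cancel_epi (A.unitor a).hom).mp hf.symm

lemma left_triangle (A : Actegory V C) (v : V) (x : C) :
    (A.actor (𝟙_ V) v x).hom ≫ (A.unitor ((A.act.obj v).obj x)).hom =
      (A.act.map (λ_ v).hom).app x := by
  apply A.act_map_cancel
  rw [Functor.map_comp]
  have ht : (A.act.obj (𝟙_ V)).map (A.unitor ((A.act.obj v).obj x)).hom =
      (A.actor (𝟙_ V) (𝟙_ V) ((A.act.obj v).obj x)).inv ≫
        (A.act.map (ρ_ (𝟙_ V)).hom).app ((A.act.obj v).obj x) := by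
    rw [Iso.eq_inv_comp, A.triangle]
  rw [ht, ← assoc]
  have hp := A.pentagon (𝟙_ V) (𝟙_ V) v x
  have hmap : (A.act.obj (𝟙_ V)).map (A.actor (𝟙_ V) v x).hom ≫
      (A.actor (𝟙_ V) (𝟙_ V) ((A.act.obj v).obj x)).inv =
      (A.actor (𝟙_ V) ((𝟙_ V) ⊗ v) x).inv ≫ (A.act.map (α_ (𝟙_ V) (𝟙_ V) v).inv).app x ≫
        (A.actor ((𝟙_ V) ⊗ (𝟙_ V)) v x).hom := by
    rw [Iso.comp_inv_eq, assoc, assoc, hp]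
    simp [← NatTrans.comp_app, ← Functor.map_comp]
  rw [hmap, assoc, assoc]
  have hcoh : (A.act.map (α_ (𝟙_ V) (𝟙_ V) v).inv).app x ≫
      ((A.actor ((𝟙_ V) ⊗ (𝟙_ V)) v x).hom ≫
        (A.act.map (ρ_ (𝟙_ V)).hom).app ((A.act.obj v).obj x)) =
      (A.act.map ((𝟙_ V) ◁ (λ_ v).hom)).app x ≫ (A.actor (𝟙_ V) v x).hom := by
    rw [← A.actor_nat_left (ρ_ (𝟙_ V)).hom v x, ← assoc, ← NatTrans.comp_app,
      ← Functor.map_comp]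
    have : (α_ (𝟙_ V) (𝟙_ V) v).inv ≫ (ρ_ (𝟙_ V)).hom ▷ v = (𝟙_ V) ◁ (λ_ v).hom := by
      rw [Iso.inv_comp_eq, MonoidalCategory.triangle]
    rw [this]
  rw [hcoh, A.actor_nat_mid, Iso.inv_hom_id_assoc]

lemma actor_commute (A : Actegory V C) (u u' v₀ : V)
    (g : u ⊗ v₀ ⟶ v₀ ⊗ u) (g' : u' ⊗ v₀ ⟶ v₀ ⊗ u') (x : C) :
    (A.actor (u ⊗ u') v₀ x).inv ≫
      (A.act.map ((α_ u u' v₀).hom ≫ u ◁ g' ≫ (α_ u v₀ u').inv ≫ g ▷ u' ≫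
        (α_ v₀ u u').hom)).app x ≫
      (A.actor v₀ (u ⊗ u') x).hom ≫ (A.act.obj v₀).map (A.actor u u' x).hom =
    (A.actor u u' ((A.act.obj v₀).obj x)).hom ≫
      (A.act.obj u).map ((A.actor u' v₀ x).inv ≫ (A.act.map g').app x ≫
        (A.actor v₀ u' x).hom) ≫
      (A.actor u v₀ ((A.act.obj u').obj x)).inv ≫
      (A.act.map g).app ((A.act.obj u').obj x) ≫
      (A.actor v₀ u ((A.act.obj u').obj x)).hom := by
  have h4 : (A.act.map (α_ u v₀ u').inv).app x ≫ (A.actor (u ⊗ v₀) u' x).hom =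
      (A.actor u (v₀ ⊗ u') x).hom ≫ (A.act.obj u).map (A.actor v₀ u' x).hom ≫
        (A.actor u v₀ ((A.act.obj u').obj x)).inv := by
    rw [← cancel_mono (A.actor u v₀ ((A.act.obj u').obj x)).hom]
    simp only [assoc, Iso.inv_hom_id, comp_id]
    rw [A.pentagon]
    simp [← NatTrans.comp_app, ← Functor.map_comp]
  have h2 : (A.act.map (α_ u u' v₀).hom).app x ≫ (A.actor u (u' ⊗ v₀) x).hom =
      (A.actor (u ⊗ u') v₀ x).hom ≫ (A.actor u u' ((A.act.obj v₀).obj x)).hom ≫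
        (A.act.obj u).map (A.actor u' v₀ x).inv := by
    rw [← cancel_mono ((A.act.obj u).map (A.actor u' v₀ x).hom)]
    simp only [assoc, ← Functor.map_comp, Iso.inv_hom_id, Functor.map_id, comp_id]
    simpa using (A.pentagon u u' v₀ x).symm
  simp only [Functor.map_comp, NatTrans.comp_app, assoc]
  slice_lhs 6 8 => rw [← A.pentagon v₀ u u' x]
  slice_lhs 5 6 => rw [A.actor_nat_left g u' x]
  slice_lhs 4 5 => rw [h4]
  slice_lhs 3 4 => rw [A.actor_nat_mid u g' x]
  slice_lhs 2 3 => rw [h2]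
  simp

end Actegory

/-- Lineator from a relative lax commutator: given a strong monoidal `F : W ⥤ V`, a
`V`-actegory on `C`, an object `v₀` and a lax commutator `γ` for `v₀` relative to `F`,
the family `ℓ_{w,x} := act⁻¹_{Fw,v₀,x} · (γ_w ⊙ 1_x) · act_{v₀,Fw,x}` is a lax lineator
for the endofunctor `G := v₀ ⊙ (−)`, with the `W`-actegory obtained by reindexing along
`F` as both source and target: it is natural in both arguments and preserves the
(reindexed) unitor and actor. -/
theorem lineator_from_rel_lax_commutator
    (F : W ⥤ V) [F.Monoidal] (A : Actegory V C) (v₀ : V) (c : RelLaxCommutator F v₀) :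
    -- naturality in the `W`-argument
    (∀ {w₁ w₂ : W} (g : w₁ ⟶ w₂) (x : C),
      (A.act.map (F.map g)).app ((A.act.obj v₀).obj x) ≫ lineatorOfCommutator F A c w₂ x =
        lineatorOfCommutator F A c w₁ x ≫ (A.act.obj v₀).map ((A.act.map (F.map g)).app x)) ∧
    -- naturality in the `C`-argument
    (∀ (w : W) {x y : C} (f : x ⟶ y),
      (A.act.obj (F.obj w)).map ((A.act.obj v₀).map f) ≫ lineatorOfCommutator F A c w y =
        lineatorOfCommutator F A c w x ≫ (A.act.obj v₀).map ((A.act.obj (F.obj w)).map f)) ∧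
    -- preservation of the reindexed unitor
    (∀ x : C,
      lineatorOfCommutator F A c (𝟙_ W) x ≫ (A.act.obj v₀).map (reindexedUnitor F A x) =
        reindexedUnitor F A ((A.act.obj v₀).obj x)) ∧
    -- preservation of the reindexed actor
    (∀ (w w' : W) (x : C),
      lineatorOfCommutator F A c (w ⊗ w') x ≫ (A.act.obj v₀).map (reindexedActor F A w w' x) =
        reindexedActor F A w w' ((A.act.obj v₀).obj x) ≫
          (A.act.obj (F.obj w)).map (lineatorOfCommutator F A c w' x) ≫
          lineatorOfCommutator F A c w ((A.act.obj (F.obj w')).obj x)) := by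
  refine ⟨fun {w₁ w₂} g x => ?_, fun w {x y} f => ?_, fun x => ?_, fun w w' x => ?_⟩
  · -- naturality in W
    dsimp only [lineatorOfCommutator]
    slice_lhs 1 2 => rw [← A.actor_inv_nat_left (F.map g) v₀ x]
    slice_lhs 2 3 => rw [← NatTrans.comp_app, ← Functor.map_comp, c.naturality g,
      Functor.map_comp, NatTrans.comp_app]
    slice_lhs 3 4 => rw [A.actor_nat_mid]
    simp
  · -- naturality in C
    dsimp only [lineatorOfCommutator]
    have h1 : (A.act.obj (F.obj w)).map ((A.act.obj v₀).map f) ≫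
        (A.actor (F.obj w) v₀ y).inv =
        (A.actor (F.obj w) v₀ x).inv ≫ (A.act.obj (F.obj w ⊗ v₀)).map f := by
      rw [Iso.comp_inv_eq, assoc, A.actor_nat, Iso.inv_hom_id_assoc]
    slice_lhs 1 2 => rw [h1]
    slice_lhs 2 3 => rw [(A.act.map (c.γ w)).naturality f]
    slice_lhs 3 4 => rw [A.actor_nat]
    simp
  · -- unitor preservation
    dsimp only [lineatorOfCommutator, reindexedUnitor]
    simp only [Functor.map_comp, assoc]
    slice_lhs 3 4 => rw [← A.actor_nat_mid v₀ (η F) x]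
    slice_lhs 4 5 => rw [A.triangle]
    slice_lhs 2 4 => rw [← NatTrans.comp_app, ← NatTrans.comp_app, ← Functor.map_comp,
      ← Functor.map_comp]
    have hγ : c.γ (𝟙_ W) ≫ v₀ ◁ η F ≫ (ρ_ v₀).hom = η F ▷ v₀ ≫ (λ_ v₀).hom := by
      rw [c.unit_law]
      simp [← MonoidalCategory.whiskerLeft_comp_assoc]
    rw [hγ, Functor.map_comp, NatTrans.comp_app, ← assoc,
      A.actor_inv_nat_left (η F) v₀ x, assoc]
    have hlt : (A.actor (𝟙_ V) v₀ x).inv ≫ (A.act.map (λ_ v₀).hom).app x =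
        (A.unitor ((A.act.obj v₀).obj x)).hom := by
      rw [Iso.inv_comp_eq, ← A.left_triangle]
    rw [hlt]
  · -- actor preservation
    dsimp only [lineatorOfCommutator, reindexedActor]
    rw [c.tensor_law w w']
    simp only [Functor.map_comp, NatTrans.comp_app, assoc]
    slice_lhs 8 9 => rw [A.actor_nat_mid v₀ (μ F w w') x]
    slice_lhs 9 10 => rw [← Functor.map_comp, ← NatTrans.comp_app, ← Functor.map_comp,
      Functor.Monoidal.μ_δ, CategoryTheory.Functor.map_id, NatTrans.id_app,
      CategoryTheory.Functor.map_id]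
    slice_lhs 1 2 => rw [A.actor_inv_nat_left (δ F w w') v₀ x]
    have hk := A.actor_commute (F.obj w) (F.obj w') v₀ (c.γ w) (c.γ w') x
    simp only [Functor.map_comp, NatTrans.comp_app, assoc, id_comp] at hk ⊢
    rw [hk]


end
end
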